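/- Let r ≥ 2 and let n be a positive multiple of r. If G is a K_{r+1}-free graph on n vertices, then the number of r-cliques of G satisfies c_r(G) ≤ (n/r)^r, and this bound is attained by the r-partite Turán graph T_r(n), which has exactly (n/r)^r r-cliques. -/

import Mathlib

open Finset

/-- The finset of all `r`-cliques (sets of `r` pairwise adjacent vertices) of `G`. -/
noncomputable def rCliques {V : Type*} [Fintype V] [DecidableEq V]
    (G : SimpleGraph V) (r : ℕ) : Finset (Finset V) :=
  letI := Classical.decPred (fun K : Finset V => G.IsNClique r K)
  Finset.univ.filter (fun K => G.IsNClique r K)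

/-- The `r`-clique spectral radius of `G`: the supremum over nonnegative vectors `x`
with `∑ v, x v ^ r = 1` of `r * ∑_{K an r-clique} ∏_{i ∈ K} x i`. -/
noncomputable def cliqueSpecRad {V : Type*} [Fintype V] [DecidableEq V]
    (G : SimpleGraph V) (r : ℕ) : ℝ :=
  sSup { y : ℝ | ∃ x : V → ℝ, (∀ v, 0 ≤ x v) ∧ (∑ v, x v ^ r) = 1 ∧
    y = r * ∑ K ∈ rCliques G r, ∏ i ∈ K, x i }

/-!
The clique Lagrangian `L(x) = ∑_{K r-clique} ∏_{k ∈ K} x k` of a `K_{r+1}`-free graph satisfies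
`L(x) ≤ (∑ x / r) ^ r` for `x ≥ 0` (Zykov symmetrization). If the support of `x` is a clique, it has
at most `r` vertices, so only the support itself can contribute and AM-GM applies. Otherwise take
non-adjacent `i, j` in the support: no monomial of `L` contains both `x i` and `x j`, so `L` is
affine along the transfer of weight between them, and moving all the weight of one onto the other
does not decrease `L` in one of the two directions while shrinking the support. Taking `x ≡ 1`
bounds the number of `r`-cliques. In `T_r(n)` the `r`-cliques are exactly the transversals of the
`r` parts, so there are `(n / r) ^ r` of them.
-/

namespace Real

theorem prod_le_arith_mean_pow_card {ι : Type*} (s : Finset ι) (z : ι → ℝ)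
    (hz : ∀ i ∈ s, 0 ≤ z i) : ∏ i ∈ s, z i ≤ ((∑ i ∈ s, z i) / #s) ^ #s := by
  rcases s.eq_empty_or_nonempty with rfl | hs
  · simp
  have hcard : (0 : ℝ) < #s := by exact_mod_cast hs.card_pos
  have amgm := geom_mean_le_arith_mean s 1 z (fun _ _ => zero_le_one) (by simpa using hcard) hz
  simp only [Pi.one_apply, rpow_one, one_mul, sum_const, nsmul_eq_mul, mul_one] at amgm
  calc ∏ i ∈ s, z i = ((∏ i ∈ s, z i) ^ ((#s : ℕ) : ℝ)⁻¹) ^ #s :=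
        (rpow_inv_natCast_pow (prod_nonneg hz) hs.card_pos.ne').symm
    _ ≤ ((∑ i ∈ s, z i) / #s) ^ #s := by gcongr; exact rpow_nonneg (prod_nonneg hz) _

end Real

theorem SimpleGraph.IsClique.card_le_of_cliqueFree {α : Type*} {G : SimpleGraph α} {r : ℕ}
    {s : Finset α} (hs : G.IsClique (s : Set α)) (hfree : G.CliqueFree (r + 1)) : #s ≤ r := by
  by_contra! h
  obtain ⟨t, hts, htc⟩ := exists_subset_card_eq h
  exact hfree t ⟨hs.subset (coe_subset.2 hts), htc⟩

theorem mem_rCliques {V : Type*} [Fintype V] [DecidableEq V] {G : SimpleGraph V} {r : ℕ}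
    {K : Finset V} : K ∈ rCliques G r ↔ G.IsNClique r K := by
  classical
  simp [rCliques]

section transferWeight

variable {V : Type*} [DecidableEq V]

def transferWeight (x : V → ℝ) (i j : V) : V → ℝ :=
  x + Pi.single i (x j) - Pi.single j (x j)

variable {x : V → ℝ} {i j v : V}

theorem transferWeight_apply_left (hij : i ≠ j) : transferWeight x i j i = x i + x j := by
  simp [transferWeight, hij]

theorem transferWeight_apply_right (hij : i ≠ j) : transferWeight x i j j = 0 := by
  simp [transferWeight, hij.symm]

theorem transferWeight_apply_of_ne (hi : v ≠ i) (hj : v ≠ j) : transferWeight x i j v = x v := by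
  simp [transferWeight, hi, hj]

theorem transferWeight_nonneg (hx : ∀ v, 0 ≤ x v) (hij : i ≠ j) (v : V) :
    0 ≤ transferWeight x i j v := by
  by_cases hvi : v = i
  · subst hvi; rw [transferWeight_apply_left hij]; exact add_nonneg (hx v) (hx j)
  by_cases hvj : v = j
  · subst hvj; rw [transferWeight_apply_right hij]
  · rw [transferWeight_apply_of_ne hvi hvj]; exact hx v

theorem prod_transferWeight (hij : i ≠ j) {K : Finset V} (hK : ¬(i ∈ K ∧ j ∈ K)) :
    ∏ k ∈ K, transferWeight x i j k = ∏ k ∈ K, x k + x j *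
      ((if i ∈ K then ∏ k ∈ K.erase i, x k else 0) - if j ∈ K then ∏ k ∈ K.erase j, x k else 0) := by
  have hrest : ∀ k ∈ K, k ≠ i → k ≠ j → transferWeight x i j k = x k :=
    fun k _ hki hkj => transferWeight_apply_of_ne hki hkj
  by_cases hiK : i ∈ K
  · have hjK : j ∉ K := fun hjK => hK ⟨hiK, hjK⟩
    rw [← mul_prod_erase K _ hiK, ← mul_prod_erase K x hiK, transferWeight_apply_left hij,
      prod_congr rfl fun k hk => hrest k (mem_of_mem_erase hk) (ne_of_mem_erase hk)
        fun hkj => hjK (hkj ▸ mem_of_mem_erase hk)]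
    simp only [hiK, ↓reduceIte, hjK, sub_zero]
    ring
  by_cases hjK : j ∈ K
  · rw [prod_eq_zero hjK (transferWeight_apply_right hij), ← mul_prod_erase K x hjK]
    simp [hiK, hjK]
  · rw [prod_congr rfl fun k hk => hrest k hk (fun h => hiK (h ▸ hk)) fun h => hjK (h ▸ hk)]
    simp [hiK, hjK]

end transferWeight

section Lagrangian

variable {V : Type*} [Fintype V] [DecidableEq V] {G : SimpleGraph V} {r : ℕ}

variable {x : V → ℝ} {i j : V}

theorem sum_transferWeight (x : V → ℝ) (i j : V) : ∑ v, transferWeight x i j v = ∑ v, x v := by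
  simp [transferWeight, sum_add_distrib, sum_sub_distrib]

theorem card_support_transferWeight_lt (hij : i ≠ j) (hi : x i ≠ 0) (hj : x j ≠ 0) :
    #{v | transferWeight x i j v ≠ 0} < #{v | x v ≠ 0} := by
  refine (card_le_card fun v hv => ?_).trans_lt
    (card_erase_lt_of_mem (mem_filter.2 ⟨mem_univ j, hj⟩))
  have hv : transferWeight x i j v ≠ 0 := (mem_filter.1 hv).2
  have hvj : v ≠ j := by rintro rfl; exact hv (transferWeight_apply_right hij)
  refine mem_erase.2 ⟨hvj, mem_filter.2 ⟨mem_univ v, ?_⟩⟩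
  by_cases hvi : v = i
  · exact hvi ▸ hi
  · rwa [← transferWeight_apply_of_ne (x := x) hvi hvj]

variable (G r) in
noncomputable def cliqueLagrangian (x : V → ℝ) : ℝ :=
  ∑ K ∈ rCliques G r, ∏ k ∈ K, x k

variable (G r) in
noncomputable def cliqueLink (x : V → ℝ) (i : V) : ℝ :=
  ∑ K ∈ rCliques G r with i ∈ K, ∏ k ∈ K.erase i, x k

theorem cliqueLagrangian_transferWeight (hij : i ≠ j) (hadj : ¬G.Adj i j) :
    cliqueLagrangian G r (transferWeight x i j) =
      cliqueLagrangian G r x + x j * (cliqueLink G r x i - cliqueLink G r x j) := by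
  have hK : ∀ K ∈ rCliques G r, ¬(i ∈ K ∧ j ∈ K) := fun K hK ⟨hiK, hjK⟩ =>
    hadj ((mem_rCliques.1 hK).1 (mem_coe.2 hiK) (mem_coe.2 hjK) hij)
  rw [cliqueLagrangian, sum_congr rfl fun K hK' => prod_transferWeight hij (hK K hK'),
    sum_add_distrib, ← mul_sum, sum_sub_distrib, ← sum_filter, ← sum_filter]
  rfl

theorem le_cliqueLagrangian_transferWeight_or (hx : ∀ v, 0 ≤ x v) (hij : i ≠ j)
    (hadj : ¬G.Adj i j) :
    cliqueLagrangian G r x ≤ cliqueLagrangian G r (transferWeight x i j) ∨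
      cliqueLagrangian G r x ≤ cliqueLagrangian G r (transferWeight x j i) := by
  rw [cliqueLagrangian_transferWeight hij hadj,
    cliqueLagrangian_transferWeight hij.symm fun h => hadj h.symm]
  rcases le_total (cliqueLink G r x j) (cliqueLink G r x i) with h | h
  · exact .inl (le_add_of_nonneg_right (mul_nonneg (hx j) (sub_nonneg.2 h)))
  · exact .inr (le_add_of_nonneg_right (mul_nonneg (hx i) (sub_nonneg.2 h)))

theorem cliqueLagrangian_le_of_isClique_support (hfree : G.CliqueFree (r + 1))
    (hx : ∀ v, 0 ≤ x v) (hS : G.IsClique ({v | x v ≠ 0} : Finset V)) :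
    cliqueLagrangian G r x ≤ ((∑ v, x v) / r) ^ r := by
  set S : Finset V := {v | x v ≠ 0}
  have hvanish : ∀ K ∈ rCliques G r, K ≠ S → ∏ k ∈ K, x k = 0 := by
    intro K hK hKS
    have hKr : #K = r := (mem_rCliques.1 hK).2
    have hKS' : ¬K ⊆ S := fun hsub =>
      hKS (eq_of_subset_of_card_le hsub (hKr ▸ hS.card_le_of_cliqueFree hfree))
    obtain ⟨v, hvK, hvS⟩ := not_subset.1 hKS'
    exact prod_eq_zero hvK (by simpa [S] using hvS)
  by_cases hSr : S ∈ rCliques G r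
  · rw [cliqueLagrangian, sum_eq_single_of_mem S hSr hvanish, ← sum_filter_ne_zero,
      ← (mem_rCliques.1 hSr).2]
    exact Real.prod_le_arith_mean_pow_card S x fun v _ => hx v
  · rw [cliqueLagrangian, sum_eq_zero fun K hK => hvanish K hK (by rintro rfl; exact hSr hK)]
    exact pow_nonneg (div_nonneg (sum_nonneg fun v _ => hx v) r.cast_nonneg) r

theorem cliqueLagrangian_le (hfree : G.CliqueFree (r + 1)) (x : V → ℝ) (hx : ∀ v, 0 ≤ x v) :
    cliqueLagrangian G r x ≤ ((∑ v, x v) / r) ^ r := by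
  induction hN : #{v | x v ≠ 0} using Nat.strong_induction_on generalizing x with
  | _ N ih =>
  by_cases hS : G.IsClique ({v | x v ≠ 0} : Finset V)
  · exact cliqueLagrangian_le_of_isClique_support hfree hx hS
  obtain ⟨i, hi, j, hj, hij, hadj⟩ : ∃ i, x i ≠ 0 ∧ ∃ j, x j ≠ 0 ∧ i ≠ j ∧ ¬G.Adj i j := by
    simpa [SimpleGraph.isClique_iff, Set.Pairwise] using hS
  have transfer : ∀ a b, x a ≠ 0 → x b ≠ 0 → a ≠ b →
      cliqueLagrangian G r x ≤ cliqueLagrangian G r (transferWeight x a b) →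
      cliqueLagrangian G r x ≤ ((∑ v, x v) / r) ^ r := fun a b ha hb hab h => by
    have := ih _ (hN ▸ card_support_transferWeight_lt hab ha hb) _
      (transferWeight_nonneg hx hab) rfl
    rw [sum_transferWeight] at this
    exact h.trans this
  rcases le_cliqueLagrangian_transferWeight_or hx hij hadj with h | h
  · exact transfer i j hi hj hij h
  · exact transfer j i hj hi hij.symm h

theorem card_rCliques_le (hfree : G.CliqueFree (r + 1)) :
    (#(rCliques G r) : ℝ) ≤ (Fintype.card V / r) ^ r := by
  simpa [cliqueLagrangian] using cliqueLagrangian_le hfree (fun _ => 1) fun _ => zero_le_one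

end Lagrangian

theorem card_rCliques_eq_prod_card_fiber {V ι : Type*} [Fintype V] [DecidableEq V] [Fintype ι]
    [DecidableEq ι] {G : SimpleGraph V} (f : V → ι) (hG : ∀ u v, G.Adj u v ↔ f u ≠ f v) :
    #(rCliques G (Fintype.card ι)) = ∏ i, #{v | f v = i} := by
  rw [← Fintype.card_piFinset]
  have hmem : ∀ g, g ∈ Fintype.piFinset (fun i => ({v | f v = i} : Finset V)) ↔
      ∀ i, f (g i) = i := by
    simp
  symm
  refine card_bij (fun g _ => univ.image g) (fun g hg => ?_) (fun g₁ hg₁ g₂ hg₂ h => ?_)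
    fun K hK => ?_
  · have hinj : Function.Injective g :=
      Function.LeftInverse.injective (g := f) ((hmem g).1 hg)
    refine mem_rCliques.2 ⟨?_, by rw [card_image_of_injective _ hinj, card_univ]⟩
    simp only [coe_image, coe_univ, Set.image_univ]
    rintro _ ⟨a, rfl⟩ _ ⟨b, rfl⟩ hab
    rw [hG, (hmem g).1 hg, (hmem g).1 hg]
    exact fun h => hab (h ▸ rfl)
  · funext a
    obtain ⟨b, -, hb⟩ := mem_image.1 (h ▸ mem_image_of_mem g₁ (mem_univ a))
    have hba : b = a := by rw [← (hmem g₂).1 hg₂ b, hb, (hmem g₁).1 hg₁ a]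
    rw [← hb, hba]
  · obtain ⟨hK, hKcard⟩ := mem_rCliques.1 hK
    have hfK : K.image f = univ := by
      refine eq_univ_of_card _ ?_
      rw [card_image_of_injOn fun u hu w hw huw => ?_, hKcard]
      by_contra hne
      exact (hG u w).1 (hK hu hw hne) huw
    choose g hgK hgf using fun i => mem_image.1 (hfK ▸ mem_univ i)
    refine ⟨g, (hmem g).2 hgf, ?_⟩
    refine eq_of_subset_of_card_le (fun v hv => ?_) ?_
    · obtain ⟨a, -, rfl⟩ := mem_image.1 hv
      exact hgK a
    · rw [hKcard, card_image_of_injective _ (Function.LeftInverse.injective (g := f) hgf),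
        card_univ]

theorem Fin.card_filter_val_mod_eq {n r i : ℕ} (hdvd : r ∣ n) (hi : i < r) :
    #{v : Fin n | (v : ℕ) % r = i} = n / r := by
  have hcount : #{v : Fin n | (v : ℕ) % r = i} = Nat.count (· ≡ i [MOD r]) n := by
    rw [Nat.count_eq_card_filter_range, ← card_map Fin.valEmbedding]
    congr 1
    ext k
    simp only [mem_map, mem_filter, mem_univ, true_and, Fin.valEmbedding_apply, mem_range,
      Nat.ModEq, Nat.mod_eq_of_lt hi]
    exact ⟨by rintro ⟨a, rfl, rfl⟩; exact ⟨a.2, rfl⟩, fun ⟨hk, hki⟩ => ⟨⟨k, hk⟩, hki, rfl⟩⟩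
  simp [hcount, Nat.count_modEq_card n (Nat.zero_lt_of_lt hi), Nat.mod_eq_zero_of_dvd hdvd]

theorem card_rCliques_turanGraph {n r : ℕ} (hr : 0 < r) (hdvd : r ∣ n) :
    #(rCliques (SimpleGraph.turanGraph n r) r) = (n / r) ^ r := by
  have := card_rCliques_eq_prod_card_fiber (G := SimpleGraph.turanGraph n r)
    (fun v => (⟨v % r, Nat.mod_lt _ hr⟩ : Fin r)) (by simp [SimpleGraph.turanGraph_adj, Fin.ext_iff])
  simp_rw [Fintype.card_fin, Fin.ext_iff] at this
  simp [this, Fin.card_filter_val_mod_eq hdvd]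

theorem stmt_10_general (r n : ℕ) (hn : 0 < n) (hdvd : r ∣ n)
    (G : SimpleGraph (Fin n)) (hfree : G.CliqueFree (r + 1)) :
    (rCliques G r).card ≤ (n / r) ^ r ∧
      (rCliques (SimpleGraph.turanGraph n r) r).card = (n / r) ^ r := by
  refine ⟨?_, card_rCliques_turanGraph (Nat.pos_of_dvd_of_pos hdvd hn) hdvd⟩
  have hbound := card_rCliques_le hfree
  rw [Fintype.card_fin, ← Nat.cast_div_charZero hdvd] at hbound
  exact_mod_cast hbound

theorem stmt_10 (r n : ℕ) (hr : 2 ≤ r) (hn : 0 < n) (hdvd : r ∣ n)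
    (G : SimpleGraph (Fin n)) (hfree : G.CliqueFree (r + 1)) :
    (rCliques G r).card ≤ (n / r) ^ r ∧
      (rCliques (SimpleGraph.turanGraph n r) r).card = (n / r) ^ r :=
  stmt_10_general r n hn hdvd G hfree
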